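/- arXiv:math/9306211 — 3 statements merged into one kernel-verified Lean document; each statement's English description precedes it below -/
import Mathlib

section
/- Let F be an m-dimensional normed space and x_1, ..., x_n vectors in F. Then the supremum over all sign choices θ_j ∈ {−1, +1} of ‖∑_j θ_j x_j‖ is at least (1/m) ∑_j ‖x_j‖. -/
/-!
Auerbach's lemma: among all `m`-tuples in the product of closed unit balls, one maximizing the
absolute value of the determinant (with respect to a fixed basis) is a basis whose coordinate
functionals have norm at most `1`, because by Cramer's rule the `i`-th coordinate of `y` is the
determinant with `y` in the `i`-th slot divided by the maximal determinant. For such a basis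
`‖y‖ ≤ ∑ᵢ |cᵢ y|`, so summing over the `x_j` gives a coordinate `i` with
`∑ⱼ ‖x_j‖ ≤ m ∑ⱼ |cᵢ x_j|`, and the signs `θ_j` of `cᵢ x_j` give
`∑ⱼ |cᵢ x_j| = cᵢ (∑ⱼ θ_j x_j) ≤ ‖∑ⱼ θ_j x_j‖`.
-/

open Finset Function Metric Module

theorem norm_inv_norm_smul {F : Type*} [NormedAddCommGroup F] [NormedSpace ℝ F] {y : F}
    (hy : y ≠ 0) : ‖‖y‖⁻¹ • y‖ = 1 := by
  rw [norm_smul, norm_inv, norm_norm, inv_mul_cancel₀ (norm_ne_zero_iff.mpr hy)]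

theorem exists_sign_sum_abs_le_norm {F κ : Type*} [NormedAddCommGroup F] [NormedSpace ℝ F]
    [Fintype κ] (f : F →ₗ[ℝ] ℝ) (hf : ∀ y, |f y| ≤ ‖y‖) (x : κ → F) :
    ∃ θ : κ → ℝ, (∀ j, θ j = 1 ∨ θ j = -1) ∧ ∑ j, |f (x j)| ≤ ‖∑ j, θ j • x j‖ := by
  set θ : κ → ℝ := fun j => if 0 ≤ f (x j) then 1 else -1
  refine ⟨θ, fun j => by by_cases h : 0 ≤ f (x j) <;> simp [θ, h], ?_⟩
  calc ∑ j, |f (x j)| = f (∑ j, θ j • x j) := by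
        simp only [map_sum, map_smul, smul_eq_mul]
        refine sum_congr rfl fun j _ => ?_
        by_cases h : 0 ≤ f (x j)
        · simp [θ, h, abs_of_nonneg h]
        · simp [θ, h, abs_of_neg (not_le.mp h)]
    _ ≤ |f (∑ j, θ j • x j)| := le_abs_self _
    _ ≤ ‖∑ j, θ j • x j‖ := hf _

namespace Module.Basis

variable {ι F : Type*} [Fintype ι] [NormedAddCommGroup F] [NormedSpace ℝ F]

theorem norm_le_sum_abs_coord (v : Basis ι ℝ F) (hv : ∀ i, ‖v i‖ ≤ 1) (y : F) :
    ‖y‖ ≤ ∑ i, |v.coord i y| := by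
  conv_lhs => rw [← v.sum_repr y]
  refine (norm_sum_le _ _).trans (sum_le_sum fun i _ => ?_)
  rw [_root_.norm_smul, Real.norm_eq_abs, coord_apply]
  exact mul_le_of_le_one_right (abs_nonneg _) (hv i)

theorem continuous_det [DecidableEq ι] {𝕜 E : Type*} [NontriviallyNormedField 𝕜]
    [CompleteSpace 𝕜] [AddCommGroup E] [Module 𝕜 E] [TopologicalSpace E]
    [IsTopologicalAddGroup E] [ContinuousSMul 𝕜 E] [T2Space E] (b : Basis ι 𝕜 E) :
    Continuous b.det := by
  have : FiniteDimensional 𝕜 E := Module.Finite.of_basis b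
  simp_rw [funext b.det_apply]
  refine Continuous.matrix_det (continuous_pi fun i => continuous_pi fun j => ?_)
  simp only [toMatrix_apply, ← coord_apply]
  exact (b.coord i).continuous_of_finiteDimensional.comp (continuous_apply j)

theorem exists_isMaxOn_abs_det [DecidableEq ι] (b : Basis ι ℝ F) :
    ∃ v ∈ closedBall (0 : ι → F) 1, b.det v ≠ 0 ∧ IsMaxOn (|b.det ·|) (closedBall 0 1) v := by
  have : FiniteDimensional ℝ F := Module.Finite.of_basis b
  have hunit : ∀ i, IsUnit ‖b i‖⁻¹ := fun i => by simpa using b.ne_zero i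
  set w := b.isUnitSMul hunit
  have hw : ⇑w ∈ closedBall (0 : ι → F) 1 := by
    refine mem_closedBall_zero_iff.2 ((pi_norm_le_iff_of_nonneg zero_le_one).2 fun i => ?_)
    rw [isUnitSMul_apply, norm_inv_norm_smul (b.ne_zero i)]
  obtain ⟨v, hvK, hmax⟩ := (isCompact_closedBall (0 : ι → F) 1).exists_isMaxOn ⟨_, hw⟩
    (continuous_abs.comp b.continuous_det).continuousOn
  refine ⟨v, hvK, fun h => (b.isUnit_det w).ne_zero ?_, hmax⟩
  simpa [h] using hmax hw

theorem abs_det_update_le_of_isMaxOn [DecidableEq ι] {b : Basis ι ℝ F} {v : ι → F}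
    (hmax : IsMaxOn (|b.det ·|) (closedBall 0 1) v) (hv : ‖v‖ ≤ 1) (i : ι) (y : F) :
    |b.det (update v i y)| ≤ ‖y‖ * |b.det v| := by
  rcases eq_or_ne y 0 with rfl | hy
  · simp
  have hmem : update v i (‖y‖⁻¹ • y) ∈ closedBall 0 1 := by
    refine mem_closedBall_zero_iff.2 ((pi_norm_le_iff_of_nonneg zero_le_one).2 fun k => ?_)
    rcases eq_or_ne k i with rfl | hk
    · rw [update_self, norm_inv_norm_smul hy]
    · rw [update_of_ne hk]
      exact (norm_le_pi_norm v k).trans hv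
  calc |b.det (update v i y)| = |b.det (update v i (‖y‖ • ‖y‖⁻¹ • y))| := by
        rw [smul_inv_smul₀ (norm_ne_zero_iff.mpr hy)]
    _ = ‖y‖ * |b.det (update v i (‖y‖⁻¹ • y))| := by
        rw [AlternatingMap.map_update_smul, smul_eq_mul, abs_mul, abs_norm]
    _ ≤ ‖y‖ * |b.det v| := mul_le_mul_of_nonneg_left (hmax hmem) (norm_nonneg y)

/-- Auerbach's lemma. -/
theorem exists_norm_le_one_abs_coord_le [DecidableEq ι] (b : Basis ι ℝ F) :
    ∃ v : Basis ι ℝ F, (∀ i, ‖v i‖ ≤ 1) ∧ ∀ i y, |v.coord i y| ≤ ‖y‖ := by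
  obtain ⟨v, hvK, hdet, hmax⟩ := b.exists_isMaxOn_abs_det
  have hv : ‖v‖ ≤ 1 := mem_closedBall_zero_iff.1 hvK
  obtain ⟨hli, hsp⟩ := (b.is_basis_iff_det).mpr (isUnit_iff_ne_zero.mpr hdet)
  refine ⟨Basis.mk hli hsp.ge, fun i => by simpa using (norm_le_pi_norm v i).trans hv,
    fun i y => ?_⟩
  have hcramer := LinearMap.congr_fun (b.det_smul_mk_coord_eq_det_update hli hsp.ge i) y
  simp only [LinearMap.smul_apply, smul_eq_mul, MultilinearMap.toLinearMap_apply,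
    AlternatingMap.coe_multilinearMap] at hcramer
  have := abs_det_update_le_of_isMaxOn hmax hv i y
  rw [← hcramer, abs_mul, mul_comm] at this
  exact le_of_mul_le_mul_right this (abs_pos.mpr hdet)

theorem exists_sign_sum_norm_le_card_mul [Nonempty ι] (b : Basis ι ℝ F) {κ : Type*}
    [Fintype κ] (x : κ → F) :
    ∃ θ : κ → ℝ, (∀ j, θ j = 1 ∨ θ j = -1) ∧
      ∑ j, ‖x j‖ ≤ Fintype.card ι * ‖∑ j, θ j • x j‖ := by
  classical
  obtain ⟨v, hv, hcoord⟩ := b.exists_norm_le_one_abs_coord_le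
  obtain ⟨i, -, hi⟩ := exists_max_image univ (fun i => ∑ j, |v.coord i (x j)|) univ_nonempty
  obtain ⟨θ, hθ, hle⟩ := exists_sign_sum_abs_le_norm (v.coord i) (hcoord i) x
  refine ⟨θ, hθ, ?_⟩
  calc ∑ j, ‖x j‖ ≤ ∑ j, ∑ i, |v.coord i (x j)| :=
        sum_le_sum fun j _ => v.norm_le_sum_abs_coord hv (x j)
    _ = ∑ i', ∑ j, |v.coord i' (x j)| := sum_comm
    _ ≤ Fintype.card ι * ∑ j, |v.coord i (x j)| := by
        simpa using sum_le_card_nsmul univ _ _ fun i' _ => hi i' (mem_univ _)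
    _ ≤ Fintype.card ι * ‖∑ j, θ j • x j‖ := by gcongr

end Module.Basis

/-- For an `m`-dimensional normed space `F` and vectors `x_1, …, x_n` in `F`,
the supremum over sign choices `θ_j = ±1` of `‖∑ θ_j x_j‖` is at least
`(1/m) ∑ ‖x_j‖`. (The supremum over the finite set of sign choices is attained,
so we state it as the existence of a sign choice.) -/
theorem stmt_0 (F : Type*) [NormedAddCommGroup F] [NormedSpace ℝ F]
    [FiniteDimensional ℝ F] (m : ℕ) (hm : Module.finrank ℝ F = m) (hm0 : 0 < m)
    (n : ℕ) (x : Fin n → F) :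
    ∃ θ : Fin n → ℝ, (∀ j, θ j = 1 ∨ θ j = -1) ∧
      (1 / (m : ℝ)) * ∑ j, ‖x j‖ ≤ ‖∑ j, θ j • x j‖ := by
  have : Nonempty (Fin m) := ⟨⟨0, hm0⟩⟩
  obtain ⟨θ, hθ, hle⟩ := (finBasisOfFinrankEq ℝ F hm).exists_sign_sum_norm_le_card_mul x
  rw [Fintype.card_fin] at hle
  refine ⟨θ, hθ, ?_⟩
  rwa [one_div, inv_mul_le_iff₀ (Nat.cast_pos.mpr hm0)]
end

section
/- Let Z be a 2-dimensional normed space and R : Z → Z a linear operator whose range has dimension at most 1. Then inf over scalars λ of the operator norm ‖R − λ·I_Z‖ is at least (1/2)·‖R‖. -/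
/-- If `Z` is a 2-dimensional normed space and `R : Z → Z` is a continuous linear
operator whose range has dimension at most 1, then
`inf_λ ‖R - λ·I_Z‖ ≥ (1/2)·‖R‖`. -/
theorem stmt_1 (Z : Type*) [NormedAddCommGroup Z] [NormedSpace ℝ Z]
    (hdim : Module.finrank ℝ Z = 2) (R : Z →L[ℝ] Z)
    (hrank : Module.finrank ℝ (LinearMap.range (R : Z →ₗ[ℝ] Z)) ≤ 1) :
    (1 / 2) * ‖R‖ ≤ ⨅ l : ℝ, ‖R - l • ContinuousLinearMap.id ℝ Z‖ := by
  have hfd : FiniteDimensional ℝ Z :=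
    FiniteDimensional.of_finrank_pos (by omega)
  have hrn := LinearMap.finrank_range_add_finrank_ker (R : Z →ₗ[ℝ] Z)
  rw [hdim] at hrn
  have hker : 0 < Module.finrank ℝ (LinearMap.ker (R : Z →ₗ[ℝ] Z)) := by omega
  obtain ⟨⟨z, hz⟩, hz0⟩ := Module.finrank_pos_iff_exists_ne_zero.mp hker
  have hzne : z ≠ 0 := by simpa [Submodule.mk_eq_zero] using hz0
  have hRz : R z = 0 := hz
  have hznorm : 0 < ‖z‖ := norm_pos_iff.mpr hzne
  apply le_ciInf
  intro l
  have h1 : |l| ≤ ‖R - l • ContinuousLinearMap.id ℝ Z‖ := by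
    have := (R - l • ContinuousLinearMap.id ℝ Z).le_opNorm z
    simp only [ContinuousLinearMap.sub_apply, ContinuousLinearMap.smul_apply,
      ContinuousLinearMap.id_apply, hRz, zero_sub, norm_neg, norm_smul,
      Real.norm_eq_abs] at this
    exact le_of_mul_le_mul_right this hznorm
  have h2 : ‖R‖ ≤ ‖R - l • ContinuousLinearMap.id ℝ Z‖ + |l| := by
    have hid : ‖l • ContinuousLinearMap.id ℝ Z‖ ≤ |l| := by
      calc ‖l • ContinuousLinearMap.id ℝ Z‖ ≤ |l| * ‖ContinuousLinearMap.id ℝ Z‖ := by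
            simpa [Real.norm_eq_abs] using norm_smul_le l (ContinuousLinearMap.id ℝ Z)
        _ ≤ |l| * 1 := by
            exact mul_le_mul_of_nonneg_left ContinuousLinearMap.norm_id_le (abs_nonneg l)
        _ = |l| := mul_one _
    calc ‖R‖ = ‖(R - l • ContinuousLinearMap.id ℝ Z) + l • ContinuousLinearMap.id ℝ Z‖ := by
          rw [sub_add_cancel]
      _ ≤ ‖R - l • ContinuousLinearMap.id ℝ Z‖ + ‖l • ContinuousLinearMap.id ℝ Z‖ :=
          norm_add_le _ _
      _ ≤ _ := by linarith
  linarith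
end

section
/- Let Z be a 2-dimensional normed space with vectors x, y satisfying (1/2)·max(|s|,|t|) ≤ ‖s·x + t·y‖ ≤ 4·(|s|+|t|) for all scalars s, t. Let T : Z → Z be linear with matrix entries a, b, c, d in the basis {x, y}, i.e., T(s·x + t·y) = (s·a + t·b)·x + (s·c + t·d)·y. Then inf_λ max(|a − λ|, |d − λ|, |b|, |c|) ≥ 2^{−5} · inf_λ ‖T − λ·I_Z‖. -/
/-- Let `Z` be a 2-dimensional normed space with vectors `x, y` satisfying
`(1/2)·max(|s|,|t|) ≤ ‖s·x + t·y‖ ≤ 4·(|s|+|t|)` for all scalars. If `T` is a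
linear operator on `Z` with matrix `(a b; c d)` in the basis `{x, y}`, then
`inf_λ max(|a-λ|, |d-λ|, |b|, |c|) ≥ 2⁻⁵ · inf_λ ‖T - λ·I_Z‖`. -/
theorem stmt_2 (Z : Type*) [NormedAddCommGroup Z] [NormedSpace ℝ Z]
    (hdim : Module.finrank ℝ Z = 2) (x y : Z)
    (hlow : ∀ s t : ℝ, (1 / 2) * max |s| |t| ≤ ‖s • x + t • y‖)
    (hup : ∀ s t : ℝ, ‖s • x + t • y‖ ≤ 4 * (|s| + |t|))
    (T : Z →L[ℝ] Z) (a b c d : ℝ)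
    (hT : ∀ s t : ℝ, T (s • x + t • y) = (s * a + t * b) • x + (s * c + t * d) • y) :
    (2 : ℝ) ^ (-5 : ℤ) * (⨅ l : ℝ, ‖T - l • ContinuousLinearMap.id ℝ Z‖) ≤
      ⨅ l : ℝ, max (max |a - l| |d - l|) (max |b| |c|) := by
  have : FiniteDimensional ℝ Z := FiniteDimensional.of_finrank_eq_succ hdim
  -- x, y are linearly independent
  have hindep : LinearIndependent ℝ ![x, y] := by
    rw [LinearIndependent.pair_iff]
    intro s t hst
    have h := hlow s t
    rw [hst, norm_zero] at h
    have hs : |s| ≤ 0 := by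
      have := le_max_left |s| |t|
      nlinarith [abs_nonneg s, abs_nonneg t]
    have ht : |t| ≤ 0 := by
      have := le_max_right |s| |t|
      nlinarith [abs_nonneg s, abs_nonneg t]
    constructor <;> [exact abs_eq_zero.mp (le_antisymm hs (abs_nonneg s));
      exact abs_eq_zero.mp (le_antisymm ht (abs_nonneg t))]
  -- every z is a combination of x and y
  have hspan : ∀ z : Z, ∃ s t : ℝ, z = s • x + t • y := by
    have h1 : Submodule.span ℝ (Set.range ![x, y]) = ⊤ := by
      apply Submodule.eq_top_of_finrank_eq
      rw [finrank_span_eq_card hindep, hdim]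
      simp
    intro z
    have hz : z ∈ Submodule.span ℝ ({x, y} : Set Z) := by
      have : Set.range ![x, y] = {x, y} := by
        simp [Matrix.range_cons, Matrix.range_empty, Set.pair_comm]
      rw [← this, h1]; trivial
    obtain ⟨s, t, h⟩ := Submodule.mem_span_pair.mp hz
    exact ⟨s, t, h.symm⟩
  -- key operator norm bound
  have key : ∀ l : ℝ, ‖T - l • ContinuousLinearMap.id ℝ Z‖ ≤
      32 * max (max |a - l| |d - l|) (max |b| |c|) := by
    intro l
    set M := max (max |a - l| |d - l|) (max |b| |c|) with hM
    have hM0 : 0 ≤ M := le_trans (abs_nonneg _) (le_trans (le_max_left _ _) (le_max_left _ _))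
    apply ContinuousLinearMap.opNorm_le_bound _ (by positivity)
    intro z
    obtain ⟨s, t, rfl⟩ := hspan z
    have happ : (T - l • ContinuousLinearMap.id ℝ Z) (s • x + t • y) =
        (s * (a - l) + t * b) • x + (s * c + t * (d - l)) • y := by
      simp only [ContinuousLinearMap.sub_apply, ContinuousLinearMap.smul_apply,
        ContinuousLinearMap.id_apply, hT]
      rw [smul_add, smul_smul, smul_smul]
      module
    rw [happ]
    have h1 := hup (s * (a - l) + t * b) (s * c + t * (d - l))
    have h2 := hlow s t
    have ha : |a - l| ≤ M := le_trans (le_max_left _ _) (le_max_left _ _)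
    have hd : |d - l| ≤ M := le_trans (le_max_right _ _) (le_max_left _ _)
    have hb : |b| ≤ M := le_trans (le_max_left _ _) (le_max_right _ _)
    have hc : |c| ≤ M := le_trans (le_max_right _ _) (le_max_right _ _)
    have e1 : |s * (a - l) + t * b| ≤ M * (|s| + |t|) := by
      calc |s * (a - l) + t * b| ≤ |s * (a - l)| + |t * b| := abs_add_le _ _
        _ = |s| * |a - l| + |t| * |b| := by rw [abs_mul, abs_mul]
        _ ≤ |s| * M + |t| * M := by
            gcongr
        _ = M * (|s| + |t|) := by ring
    have e2 : |s * c + t * (d - l)| ≤ M * (|s| + |t|) := by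
      calc |s * c + t * (d - l)| ≤ |s * c| + |t * (d - l)| := abs_add_le _ _
        _ = |s| * |c| + |t| * |d - l| := by rw [abs_mul, abs_mul]
        _ ≤ |s| * M + |t| * M := by
            gcongr
        _ = M * (|s| + |t|) := by ring
    have hst : |s| + |t| ≤ 2 * max |s| |t| := by
      have := le_max_left |s| |t|
      have := le_max_right |s| |t|
      linarith
    calc ‖(s * (a - l) + t * b) • x + (s * c + t * (d - l)) • y‖
        ≤ 4 * (|s * (a - l) + t * b| + |s * c + t * (d - l)|) := h1
      _ ≤ 4 * (M * (|s| + |t|) + M * (|s| + |t|)) := by linarith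
      _ = 8 * M * (|s| + |t|) := by ring
      _ ≤ 8 * M * (2 * max |s| |t|) := by nlinarith [abs_nonneg s, abs_nonneg t]
      _ = 32 * M * ((1/2) * max |s| |t|) := by ring
      _ ≤ 32 * M * ‖s • x + t • y‖ := by gcongr
  -- conclude
  have hbdd : BddBelow (Set.range fun l : ℝ => ‖T - l • ContinuousLinearMap.id ℝ Z‖) := by
    refine ⟨0, ?_⟩
    rintro _ ⟨l, rfl⟩
    exact norm_nonneg _
  apply le_ciInf
  intro l
  have h1 : (⨅ l : ℝ, ‖T - l • ContinuousLinearMap.id ℝ Z‖) ≤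
      ‖T - l • ContinuousLinearMap.id ℝ Z‖ := ciInf_le hbdd l
  have h2 := key l
  have : (2 : ℝ) ^ (-5 : ℤ) = 1 / 32 := by norm_num
  rw [this]
  nlinarith [norm_nonneg (T - l • ContinuousLinearMap.id ℝ Z)]
end
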